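/- Let w be a control function (w(s,t) ≥ 0, continuous, superadditive: w(s,u) + w(u,t) ≤ w(s,t) for s ≤ u ≤ t, and w(s,s) = 0). Let p, q > 0 with θ := 1/p + 1/q > 1. Let φ be a function of two intervals such that |φ([u,u']×[v,v'])| ≤ C w(u,u')^{1/p} w(v,v')^{1/q} for all partition points u < u', v < v' of a partition s = t_0 < t_1 < ... < t_m = t. Then |∑_{i=1}^m φ([s,t_{i-1}]×[t_{i-1},t_i])| ≤ C ζ(θ) w(s,t)^θ, where ζ is the Riemann zeta function. -/

import Mathlib

/-!
Deleting the partition point `t_{k+1}` changes the sum by the single increment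
`Φ([t_k,t_{k+1}]×[t_{k+1},t_{k+2}])`, of size at most
`C w(t_k,t_{k+1})^{1/p} w(t_{k+1},t_{k+2})^{1/q}`. Weighted AM–GM together with superadditivity
of `w` shows that among `n` interior points one of them makes this at most `C (w(s,T)/n)^θ`.
Deleting such points one at a time down to the one-interval partition, whose sum vanishes,
bounds the sum by `C ∑_{1≤n<m} n^{-θ} w(s,T)^θ ≤ C ζ(θ) w(s,T)^θ`.
-/

open Finset

/-- The paper's `Φ([a,b]×[c,d])`. -/
def rectIncr (Φ : ℝ → ℝ → ℝ) (a b c d : ℝ) : ℝ := Φ b d - Φ a d - Φ b c + Φ a c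

def youngSum (Φ : ℝ → ℝ → ℝ) (s : ℝ) (u : ℕ → ℝ) (m : ℕ) : ℝ :=
  ∑ j ∈ range m, rectIncr Φ s (u j) (u j) (u (j + 1))

structure IsControlOn (w : ℝ → ℝ → ℝ) (s T : ℝ) : Prop where
  nonneg : ∀ a b, s ≤ a → a ≤ b → b ≤ T → 0 ≤ w a b
  superadditive : ∀ a b c, s ≤ a → a ≤ b → b ≤ c → c ≤ T → w a b + w b c ≤ w a c

/-- The ℕ-analogue of `Fin.succAbove`: the increasing enumeration of `ℕ \ {i}`. -/
def skipIndex (i j : ℕ) : ℕ := if j < i then j else j + 1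

theorem skipIndex_of_lt {i j : ℕ} (h : j < i) : skipIndex i j = j := if_pos h

theorem skipIndex_of_le {i j : ℕ} (h : i ≤ j) : skipIndex i j = j + 1 := if_neg h.not_gt

theorem skipIndex_monotone (i : ℕ) : Monotone (skipIndex i) := by
  intro j k hjk
  unfold skipIndex
  split_ifs <;> omega

theorem skipIndex_le_succ {i j n : ℕ} (h : j ≤ n) : skipIndex i j ≤ n + 1 := by
  unfold skipIndex
  split_ifs <;> omega

theorem rectIncr_add_rectIncr (Φ : ℝ → ℝ → ℝ) (s a b c : ℝ) :
    rectIncr Φ s a a b + rectIncr Φ s b b c = rectIncr Φ s a a c + rectIncr Φ a b b c := by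
  unfold rectIncr
  ring

theorem youngSum_eq_youngSum_comp_skipIndex (Φ : ℝ → ℝ → ℝ) (s : ℝ) (u : ℕ → ℝ) {k n : ℕ}
    (hk : k ≤ n) :
    youngSum Φ s u (n + 2) = youngSum Φ s (u ∘ skipIndex (k + 1)) (n + 1)
      + rectIncr Φ (u k) (u (k + 1)) (u (k + 1)) (u (k + 2)) := by
  obtain ⟨r, rfl⟩ := Nat.exists_eq_add_of_le hk
  have hhead : ∑ j ∈ range k, rectIncr Φ s (u (skipIndex (k + 1) j)) (u (skipIndex (k + 1) j))
      (u (skipIndex (k + 1) (j + 1))) = ∑ j ∈ range k, rectIncr Φ s (u j) (u j) (u (j + 1)) :=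
    sum_congr rfl fun j hj => by
      rw [mem_range] at hj
      rw [skipIndex_of_lt (by omega : j < k + 1), skipIndex_of_lt (by omega : j + 1 < k + 1)]
  have htail : ∑ j ∈ range r, rectIncr Φ s (u (skipIndex (k + 1) (k + 1 + j)))
      (u (skipIndex (k + 1) (k + 1 + j))) (u (skipIndex (k + 1) (k + 1 + j + 1)))
      = ∑ j ∈ range r, rectIncr Φ s (u (k + 2 + j)) (u (k + 2 + j)) (u (k + 2 + j + 1)) :=
    sum_congr rfl fun j _ => by
      rw [skipIndex_of_le (by omega), skipIndex_of_le (by omega)]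
      ring_nf
  simp only [youngSum, Function.comp_apply]
  rw [show k + r + 2 = k + 2 + r by omega, show k + r + 1 = k + 1 + r by omega,
    sum_range_add _ (k + 2), sum_range_add _ (k + 1), sum_range_succ _ (k + 1), sum_range_succ _ k,
    sum_range_succ _ k, hhead, htail, skipIndex_of_lt k.lt_succ_self,
    skipIndex_of_le le_rfl, add_assoc (∑ j ∈ range k, _), rectIncr_add_rectIncr]
  ring

theorem IsControlOn.sum_le {w : ℝ → ℝ → ℝ} {s T : ℝ} (hw : IsControlOn w s T) {u : ℕ → ℝ}
    {m : ℕ} (hu : MonotoneOn u (Set.Iic m)) (hs : s ≤ u 0) (hT : u m ≤ T) {n : ℕ} (hn : n ≤ m) :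
    ∑ j ∈ range n, w (u j) (u (j + 1)) ≤ w (u 0) (u n) := by
  have mono : ∀ {i j}, i ≤ j → j ≤ m → u i ≤ u j := fun hij hj =>
    hu (Set.mem_Iic.2 (hij.trans hj)) (Set.mem_Iic.2 hj) hij
  induction n with
  | zero => simpa using hw.nonneg _ _ hs le_rfl ((mono m.zero_le le_rfl).trans hT)
  | succ n ih =>
    rw [sum_range_succ]
    have := hw.superadditive (u 0) (u n) (u (n + 1)) hs (mono n.zero_le (by omega))
      (mono n.le_succ hn) ((mono hn le_rfl).trans hT)
    linarith [ih (by omega)]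

theorem rpow_mul_rpow_le_weighted_mean_rpow {x y a b : ℝ} (hx : 0 ≤ x) (hy : 0 ≤ y)
    (ha : 0 ≤ a) (hb : 0 ≤ b) (hab : 0 < a + b) :
    x ^ a * y ^ b ≤ ((a * x + b * y) / (a + b)) ^ (a + b) := by
  have amgm := Real.geom_mean_le_arith_mean2_weighted (div_nonneg ha hab.le)
    (div_nonneg hb hab.le) hx hy (by field_simp)
  calc x ^ a * y ^ b = (x ^ (a / (a + b)) * y ^ (b / (a + b))) ^ (a + b) := by
        rw [Real.mul_rpow (by positivity) (by positivity), ← Real.rpow_mul hx, ← Real.rpow_mul hy,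
          div_mul_cancel₀ _ hab.ne', div_mul_cancel₀ _ hab.ne']
    _ ≤ ((a * x + b * y) / (a + b)) ^ (a + b) := by
        gcongr
        convert amgm using 1
        field_simp

theorem exists_rpow_mul_rpow_le_of_sum_le {x : ℕ → ℝ} {n : ℕ} {W a b : ℝ}
    (hx : ∀ j ≤ n, 0 ≤ x j) (ha : 0 ≤ a) (hb : 0 ≤ b) (hab : 0 < a + b) (hn : 0 < n)
    (hW : ∑ j ∈ range (n + 1), x j ≤ W) :
    ∃ k < n, x k ^ a * x (k + 1) ^ b ≤ (W / n) ^ (a + b) := by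
  have hfront : ∑ j ∈ range n, x j ≤ W := by
    rw [sum_range_succ] at hW
    linarith [hx n le_rfl]
  have hback : ∑ j ∈ range n, x (j + 1) ≤ W := by
    rw [sum_range_succ'] at hW
    linarith [hx 0 n.zero_le]
  have hmean : ∑ j ∈ range n, (a * x j + b * x (j + 1)) / (a + b) ≤ ∑ _j ∈ range n, W / n := by
    rw [← sum_div, sum_add_distrib, ← mul_sum, ← mul_sum, sum_const, card_range, nsmul_eq_mul,
      mul_div_cancel₀ _ (by positivity), div_le_iff₀ hab]
    nlinarith
  obtain ⟨k, hk, hkW⟩ := exists_le_of_sum_le (nonempty_range_iff.2 hn.ne') hmean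
  rw [mem_range] at hk
  have hxk := hx k (by omega)
  have hxk' := hx (k + 1) (by omega)
  refine ⟨k, hk, (rpow_mul_rpow_le_weighted_mean_rpow hxk hxk' ha hb hab).trans ?_⟩
  gcongr

theorem abs_youngSum_le {Φ w : ℝ → ℝ → ℝ} {s T a b C : ℝ} (ha : 0 ≤ a) (hb : 0 ≤ b)
    (hab : 0 < a + b) (hC : 0 ≤ C) (hw : IsControlOn w s T) (m : ℕ) (u : ℕ → ℝ)
    (hu : MonotoneOn u (Set.Iic m)) (hu0 : u 0 = s) (hum : u m = T)
    (hΦ : ∀ i j l, i ≤ j → j ≤ l → l ≤ m →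
      |rectIncr Φ (u i) (u j) (u j) (u l)| ≤ C * w (u i) (u j) ^ a * w (u j) (u l) ^ b) :
    |youngSum Φ s u m|
      ≤ C * (∑ k ∈ range (m - 1), ((k : ℝ) + 1) ^ (-(a + b))) * w s T ^ (a + b) := by
  induction m generalizing u with
  | zero => simp [youngSum]
  | succ n ih =>
  rcases n with _ | n
  · simp [youngSum, rectIncr, hu0]
  have mono : ∀ {i j}, i ≤ j → j ≤ n + 2 → u i ≤ u j := fun hij hj =>
    hu (Set.mem_Iic.2 (hij.trans hj)) (Set.mem_Iic.2 hj) hij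
  have hs : ∀ {j}, j ≤ n + 2 → s ≤ u j := fun hj => hu0 ▸ mono (Nat.zero_le _) hj
  have hT : ∀ {j}, j ≤ n + 2 → u j ≤ T := fun hj => hum ▸ mono hj le_rfl
  have hW : 0 ≤ w s T := hw.nonneg s T le_rfl ((hs le_rfl).trans (hT le_rfl)) le_rfl
  obtain ⟨k, hk, hsmall⟩ := exists_rpow_mul_rpow_le_of_sum_le (x := fun j => w (u j) (u (j + 1)))
    (fun j hj => hw.nonneg _ _ (hs (by omega)) (mono j.le_succ (by omega)) (hT (by omega)))
    ha hb hab n.succ_pos (hu0 ▸ hum ▸ hw.sum_le hu (hs (Nat.zero_le _)) (hT le_rfl) le_rfl)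
  have hskip := skipIndex_monotone (k + 1)
  have hremoved := ih (u ∘ skipIndex (k + 1))
    (hu.comp (hskip.monotoneOn _) fun j hj => Set.mem_Iic.2 (skipIndex_le_succ hj))
    (by simp [skipIndex_of_lt, hu0]) (by simp [skipIndex_of_le (by omega : k + 1 ≤ n + 1), hum])
    fun i j l hij hjl hl => hΦ _ _ _ (hskip hij) (hskip hjl) (skipIndex_le_succ hl)
  have hincr := hΦ k (k + 1) (k + 2) k.le_succ (k + 1).le_succ (by omega)
  rw [youngSum_eq_youngSum_comp_skipIndex Φ s u (by omega : k ≤ n)]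
  calc _ ≤ |youngSum Φ s (u ∘ skipIndex (k + 1)) (n + 1)|
          + |rectIncr Φ (u k) (u (k + 1)) (u (k + 1)) (u (k + 2))| := abs_add_le _ _
    _ ≤ C * (∑ i ∈ range n, ((i : ℝ) + 1) ^ (-(a + b))) * w s T ^ (a + b)
          + C * (w s T / (n + 1 : ℕ)) ^ (a + b) := by
        gcongr
        · exact hremoved
        · rw [mul_assoc] at hincr
          exact hincr.trans (mul_le_mul_of_nonneg_left hsmall hC)
    _ = C * (∑ i ∈ range (n + 1), ((i : ℝ) + 1) ^ (-(a + b))) * w s T ^ (a + b) := by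
        rw [sum_range_succ, Real.div_rpow hW (by positivity), Real.rpow_neg (by positivity)]
        push_cast
        ring

/-- Young-type maximal inequality (one-dimensional case): if `w` is a control
function on `[s,T]`, `θ = 1/p + 1/q > 1`, and the rectangular increments of
`Φ` satisfy `|Φ([u,u']×[v,v'])| ≤ C w(u,u')^{1/p} w(v,v')^{1/q}` on the points
of a partition `s = t_0 < … < t_m = T`, then
`|∑_{i=1}^m Φ([s,t_{i-1}]×[t_{i-1},t_i])| ≤ C ζ(θ) w(s,T)^θ`. -/
theorem young_maximal_inequality (p q C : ℝ) (hp : 0 < p) (hq : 0 < q)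
    (hθ : 1 < 1/p + 1/q) (hC : 0 ≤ C)
    (s T : ℝ) (hsT : s ≤ T) (w : ℝ → ℝ → ℝ) (Φ : ℝ → ℝ → ℝ)
    (hw0 : ∀ a b : ℝ, s ≤ a → a ≤ b → b ≤ T → 0 ≤ w a b)
    (hwsuper : ∀ a b c : ℝ, s ≤ a → a ≤ b → b ≤ c → c ≤ T →
      w a b + w b c ≤ w a c)
    (m : ℕ) (t : Fin (m+1) → ℝ) (hmono : Monotone t)
    (ht0 : t 0 = s) (htm : t (Fin.last m) = T)
    (hΦ : ∀ i j k l : Fin (m+1), i ≤ j → k ≤ l →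
      |Φ (t j) (t l) - Φ (t i) (t l) - Φ (t j) (t k) + Φ (t i) (t k)|
        ≤ C * (w (t i) (t j)) ^ (1/p) * (w (t k) (t l)) ^ (1/q)) :
    |∑ i : Fin m,
        (Φ (t i.castSucc) (t i.succ) - Φ s (t i.succ)
          - Φ (t i.castSucc) (t i.castSucc) + Φ s (t i.castSucc))|
      ≤ C * (∑' n : ℕ, ((n : ℝ) + 1) ^ (-(1/p + 1/q))) * (w s T) ^ (1/p + 1/q) := by
  set u : ℕ → ℝ := fun i => t (Fin.clamp i m)
  have hu : ∀ i : Fin (m + 1), u i = t i := fun i => congrArg t (Fin.ext (min_eq_left i.is_le))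
  have hsum : ∑ i : Fin m, (Φ (t i.castSucc) (t i.succ) - Φ s (t i.succ)
      - Φ (t i.castSucc) (t i.castSucc) + Φ s (t i.castSucc)) = youngSum Φ s u m := by
    rw [youngSum, ← Fin.sum_univ_eq_sum_range]
    refine sum_congr rfl fun i _ => ?_
    rw [← hu i.castSucc, ← hu i.succ]
    rfl
  have hzeta : Summable fun n : ℕ => ((n : ℝ) + 1) ^ (-(1/p + 1/q)) := by
    have hθ' : -(1/p + 1/q) < -1 := by linarith
    simpa using (summable_nat_add_iff 1).2 (Real.summable_nat_rpow.2 hθ')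
  rw [hsum]
  calc _ ≤ C * (∑ k ∈ range (m - 1), ((k : ℝ) + 1) ^ (-(1/p + 1/q))) * w s T ^ (1/p + 1/q) :=
        abs_youngSum_le (by positivity) (by positivity) (by linarith) hC ⟨hw0, hwsuper⟩ m u
          ((hmono.comp Fin.clamp_monotone).monotoneOn _) (hu 0 ▸ ht0) (hu (Fin.last m) ▸ htm)
          fun i j l hij hjl _ => hΦ _ _ _ _ (Fin.clamp_monotone hij) (Fin.clamp_monotone hjl)
    _ ≤ _ := by
        have hW := hw0 s T le_rfl hsT le_rfl
        gcongr
        exact hzeta.sum_le_tsum _ fun _ _ => by positivity
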